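/- A Laurent polynomial f = Σ_{i,j∈ℤ} a_{i,j} x^i y^j ∈ ℂ[x^{±1}, y^{±1}] belongs to 𝔄_{1,1} if and only if for every l ∈ ℤ the linear relation Σ_{i+j=l} (2i + j) a_{i,j} = 0 holds. -/

import Mathlib

set_option synthInstance.maxHeartbeats 400000
set_option maxHeartbeats 1000000

noncomputable section
open scoped BigOperators

/-- Laurent polynomials `ℂ[x^{±1}, y^{±1}]`, as the group algebra of `ℤ²`. -/
abbrev Alg2 : Type := AddMonoidAlgebra ℂ (ℤ × ℤ)

/-- The Euler operator `∂_x = x ∂/∂x` on Laurent polynomials. -/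
def eulx : Alg2 →ₗ[ℂ] Alg2 :=
  (AddMonoidAlgebra.coeffLinearEquiv ℂ).symm.toLinearMap ∘ₗ
  Finsupp.lsum ℂ (fun μ : ℤ × ℤ => ((μ.1 : ℂ)) • Finsupp.lsingle μ) ∘ₗ
  (AddMonoidAlgebra.coeffLinearEquiv ℂ).toLinearMap

/-- The Euler operator `∂_y = y ∂/∂y` on Laurent polynomials. -/
def euly : Alg2 →ₗ[ℂ] Alg2 :=
  (AddMonoidAlgebra.coeffLinearEquiv ℂ).symm.toLinearMap ∘ₗ
  Finsupp.lsum ℂ (fun μ : ℤ × ℤ => ((μ.2 : ℂ)) • Finsupp.lsingle μ) ∘ₗ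
  (AddMonoidAlgebra.coeffLinearEquiv ℂ).toLinearMap

/-- The Laurent monomial `x^i y^j`. -/
def monA2 (μ : ℤ × ℤ) : Alg2 := AddMonoidAlgebra.single μ 1

/-- Quasi-invariance with parameter `k = −1/2`: `(∂_x + (1/2) ∂_y) f` is divisible
by `x − y`. -/
def QuasiInv11 (f : Alg2) : Prop :=
  (monA2 (1, 0) - monA2 (0, 1)) ∣ (eulx f + (2⁻¹ : ℂ) • euly f)

/-- The algebra `𝔄_{1,1}` of quasi-invariant Laurent polynomials, as a subspace of
`ℂ[x^{±1}, y^{±1}]`. -/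
def AA11 : Submodule ℂ Alg2 where
  carrier := {f | QuasiInv11 f}
  add_mem' := by
    intro f g hf hg
    show QuasiInv11 (f + g)
    unfold QuasiInv11
    rw [map_add, map_add, smul_add, add_add_add_comm]
    exact dvd_add hf hg
  zero_mem' := by
    show QuasiInv11 0
    unfold QuasiInv11
    rw [map_zero, map_zero, smul_zero, add_zero]
    exact dvd_zero _
  smul_mem' := by
    intro c f hf
    show QuasiInv11 (c • f)
    unfold QuasiInv11
    rw [map_smul, map_smul, smul_comm (2⁻¹ : ℂ) c, ← smul_add, Algebra.smul_def]
    exact (hf : QuasiInv11 f).mul_left _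

/-- `φ_{ij} = x^i y^j − ((2i+j)/(2i+j−1)) x^{i−1} y^{j+1}` (for `2i+j ≠ 1`). -/
def phiA (i j : ℤ) : Alg2 :=
  AddMonoidAlgebra.single (i, j) 1
    - (((2*i + j : ℤ) : ℂ) / ((2*i + j - 1 : ℤ) : ℂ)) • AddMonoidAlgebra.single (i-1, j+1) 1

/-- `φ_i = x^i y^{−2i}` (the case `2i+j = 0` of `φ_{ij}`). -/
def phi0A (i : ℤ) : Alg2 := AddMonoidAlgebra.single (i, -2*i) 1

/-- `ψ_i = x^{i+1} y^{−1−2i} + x^{i−1} y^{1−2i}`. -/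
def psiA (i : ℤ) : Alg2 :=
  AddMonoidAlgebra.single (i+1, -1-2*i) 1 + AddMonoidAlgebra.single (i-1, 1-2*i) 1

section Aux

/-- Coefficient of `eulx f`. -/
lemma eulx_apply (f : Alg2) (ν : ℤ × ℤ) : (eulx f).coeff ν = (ν.1 : ℂ) * f.coeff ν := by
  show ((Finsupp.lsum ℂ (fun μ : ℤ × ℤ => ((μ.1 : ℂ)) • Finsupp.lsingle μ) :
      (ℤ × ℤ →₀ ℂ) →ₗ[ℂ] (ℤ × ℤ →₀ ℂ)) f.coeff) ν = _
  generalize f.coeff = g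
  induction g using Finsupp.induction_linear with
  | zero => simp
  | add a b ha hb =>
      rw [map_add]
      erw [Finsupp.add_apply, Finsupp.add_apply]
      rw [ha, hb]; ring
  | single μ c =>
      erw [Finsupp.lsum_single, LinearMap.smul_apply, Finsupp.smul_apply]
      rw [Finsupp.lsingle_apply, Finsupp.single_apply, smul_eq_mul]
      split_ifs with h
      · subst h; rfl
      · simp

/-- Coefficient of `euly f`. -/
lemma euly_apply (f : Alg2) (ν : ℤ × ℤ) : (euly f).coeff ν = (ν.2 : ℂ) * f.coeff ν := by
  show ((Finsupp.lsum ℂ (fun μ : ℤ × ℤ => ((μ.2 : ℂ)) • Finsupp.lsingle μ) :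
      (ℤ × ℤ →₀ ℂ) →ₗ[ℂ] (ℤ × ℤ →₀ ℂ)) f.coeff) ν = _
  generalize f.coeff = g
  induction g using Finsupp.induction_linear with
  | zero => simp
  | add a b ha hb =>
      rw [map_add]
      erw [Finsupp.add_apply, Finsupp.add_apply]
      rw [ha, hb]; ring
  | single μ c =>
      erw [Finsupp.lsum_single, LinearMap.smul_apply, Finsupp.smul_apply]
      rw [Finsupp.lsingle_apply, Finsupp.single_apply, smul_eq_mul]
      split_ifs with h
      · subst h; rfl
      · simp

/-- Coefficient of `h = eulx f + ½ euly f`. -/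
lemma hcoeff (f : Alg2) (ν : ℤ × ℤ) :
    (eulx f + (2⁻¹ : ℂ) • euly f).coeff ν = ((ν.1 : ℂ) + 2⁻¹ * ν.2) * f.coeff ν := by
  rw [AddMonoidAlgebra.coeff_add, AddMonoidAlgebra.coeff_smul, Finsupp.add_apply, Finsupp.smul_apply, eulx_apply, euly_apply, smul_eq_mul]
  ring

/-- `x − y` divides `(y/x)^j − 1` for every integer `j`. -/
lemma dvd_single_diag_sub_one (j : ℤ) :
    (monA2 (1, 0) - monA2 (0, 1)) ∣
      (AddMonoidAlgebra.single ((-j, j) : ℤ × ℤ) (1 : ℂ) - 1) := by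
  have keyP : (monA2 (1, 0) - monA2 (0, 1)) ∣
      (AddMonoidAlgebra.single ((-1, 1) : ℤ × ℤ) (1 : ℂ) - 1) := by
    refine ⟨-(AddMonoidAlgebra.single ((-1, 0) : ℤ × ℤ) (1 : ℂ)), ?_⟩
    rw [monA2, monA2, mul_neg, sub_mul, AddMonoidAlgebra.single_mul_single,
      AddMonoidAlgebra.single_mul_single]
    norm_num [AddMonoidAlgebra.one_def]
    exact AddMonoidAlgebra.one_def
  have keyN : (monA2 (1, 0) - monA2 (0, 1)) ∣
      (AddMonoidAlgebra.single ((1, -1) : ℤ × ℤ) (1 : ℂ) - 1) := by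
    refine ⟨AddMonoidAlgebra.single ((0, -1) : ℤ × ℤ) (1 : ℂ), ?_⟩
    rw [monA2, monA2, sub_mul, AddMonoidAlgebra.single_mul_single,
      AddMonoidAlgebra.single_mul_single]
    norm_num [AddMonoidAlgebra.one_def]
    exact AddMonoidAlgebra.one_def
  induction j using Int.induction_on with
  | zero =>
      simp [AddMonoidAlgebra.one_def]
      rw [show ((0, 0) : ℤ × ℤ) = 0 from rfl, sub_self]
      exact dvd_zero _
  | succ i ih =>
      have hpt : ((-1, 1) : ℤ × ℤ) + (-(i : ℤ), (i : ℤ)) = ((-(i+1 : ℤ), (i+1 : ℤ)) : ℤ × ℤ) := by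
        simp [Prod.ext_iff]; ring
      have hid : (AddMonoidAlgebra.single ((-(i+1 : ℤ), (i+1 : ℤ)) : ℤ × ℤ) (1 : ℂ) - 1)
          = AddMonoidAlgebra.single ((-1, 1) : ℤ × ℤ) (1 : ℂ)
              * (AddMonoidAlgebra.single ((-(i : ℤ), (i : ℤ)) : ℤ × ℤ) (1 : ℂ) - 1)
            + (AddMonoidAlgebra.single ((-1, 1) : ℤ × ℤ) (1 : ℂ) - 1) := by
        rw [mul_sub, AddMonoidAlgebra.single_mul_single, one_mul, mul_one, hpt]
        ring
      rw [hid]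
      exact dvd_add (ih.mul_left _) keyP
  | pred i ih =>
      have hpt : ((1, -1) : ℤ × ℤ) + (-(-(i:ℤ)), (-(i:ℤ))) = ((-(-(i:ℤ)-1), (-(i:ℤ)-1)) : ℤ × ℤ) := by
        simp [Prod.ext_iff]; ring
      have hid : (AddMonoidAlgebra.single ((-(-(i:ℤ)-1), (-(i:ℤ)-1)) : ℤ × ℤ) (1 : ℂ) - 1)
          = AddMonoidAlgebra.single ((1, -1) : ℤ × ℤ) (1 : ℂ)
              * (AddMonoidAlgebra.single ((-(-(i:ℤ)), (-(i:ℤ))) : ℤ × ℤ) (1 : ℂ) - 1)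
            + (AddMonoidAlgebra.single ((1, -1) : ℤ × ℤ) (1 : ℂ) - 1) := by
        rw [mul_sub, AddMonoidAlgebra.single_mul_single, one_mul, mul_one, hpt]
        ring
      rw [hid]
      exact dvd_add (ih.mul_left _) keyN

/-- `x − y` divides `x^i y^j − x^{i+j}`. -/
lemma dvd_single_sub_single (μ : ℤ × ℤ) :
    (monA2 (1, 0) - monA2 (0, 1)) ∣
      (AddMonoidAlgebra.single μ (1 : ℂ)
        - AddMonoidAlgebra.single ((μ.1 + μ.2, 0) : ℤ × ℤ) (1 : ℂ)) := by
  have hpt : ((μ.1 + μ.2, 0) : ℤ × ℤ) + (-μ.2, μ.2) = μ := by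
    simp [Prod.ext_iff]
  have hid : AddMonoidAlgebra.single μ (1 : ℂ)
        - AddMonoidAlgebra.single ((μ.1 + μ.2, 0) : ℤ × ℤ) (1 : ℂ)
      = AddMonoidAlgebra.single ((μ.1 + μ.2, 0) : ℤ × ℤ) (1 : ℂ)
          * (AddMonoidAlgebra.single ((-μ.2, μ.2) : ℤ × ℤ) (1 : ℂ) - 1) := by
    rw [mul_sub, AddMonoidAlgebra.single_mul_single, one_mul, mul_one, hpt]
  rw [hid]
  exact (dvd_single_diag_sub_one μ.2).mul_left _

/-- Coefficient of the evaluation-at-`x = y` map. -/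
lemma mapDomain_coeff (h : Alg2) (l : ℤ) :
    Finsupp.mapDomain (fun μ : ℤ × ℤ => μ.1 + μ.2) h.coeff l
      = ∑ μ ∈ h.coeff.support.filter (fun μ : ℤ × ℤ => μ.1 + μ.2 = l), h.coeff μ := by
  classical
  rw [Finsupp.mapDomain, Finsupp.sum_apply, Finsupp.sum, Finset.sum_filter]
  refine Finset.sum_congr rfl fun μ _ => ?_
  rw [Finsupp.single_apply]

/-- Divisibility by `x − y` is equivalent to vanishing under evaluation at `x = y`. -/
lemma dvd_iff_mapDomain_eq_zero (h : Alg2) :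
    (monA2 (1, 0) - monA2 (0, 1)) ∣ h ↔
      Finsupp.mapDomain (fun μ : ℤ × ℤ => μ.1 + μ.2) h.coeff = 0 := by
  classical
  constructor
  · rintro ⟨q, rfl⟩
    have hfun : (fun μ : ℤ × ℤ => μ.1 + μ.2)
        = ⇑(AddMonoidHom.fst ℤ ℤ + AddMonoidHom.snd ℤ ℤ) := rfl
    have hm := AddMonoidAlgebra.mapDomain_mul (R := ℂ)
      (AddMonoidHom.fst ℤ ℤ + AddMonoidHom.snd ℤ ℤ) (monA2 (1, 0) - monA2 (0, 1)) q
    have hd : AddMonoidAlgebra.mapDomain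
          (⇑(AddMonoidHom.fst ℤ ℤ + AddMonoidHom.snd ℤ ℤ)) (monA2 (1, 0) - monA2 (0, 1))
        = 0 := by
      apply AddMonoidAlgebra.coeff_injective
      show Finsupp.mapDomain.addMonoidHom _ ((monA2 (1, 0)).coeff - (monA2 (0, 1)).coeff) = (0 : ℤ →₀ ℂ)
      rw [map_sub]
      show Finsupp.mapDomain _ _ - Finsupp.mapDomain _ _ = 0
      rw [monA2, monA2, AddMonoidAlgebra.coeff_single, AddMonoidAlgebra.coeff_single,
        Finsupp.mapDomain_single, Finsupp.mapDomain_single]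
      norm_num
    rw [hfun]
    show (AddMonoidAlgebra.mapDomain
      (⇑(AddMonoidHom.fst ℤ ℤ + AddMonoidHom.snd ℤ ℤ)) ((monA2 (1, 0) - monA2 (0, 1)) * q)).coeff = 0
    rw [hm, hd, zero_mul]
    rfl
  · intro hev
    have hrep : h = ∑ μ ∈ h.coeff.support,
        (AddMonoidAlgebra.single μ (h.coeff μ)
          - AddMonoidAlgebra.single ((μ.1 + μ.2, 0) : ℤ × ℤ) (h.coeff μ)) := by
      rw [Finset.sum_sub_distrib]
      have h1 : ∑ μ ∈ h.coeff.support, AddMonoidAlgebra.single μ (h.coeff μ) = h := by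
        exact AddMonoidAlgebra.sum_coeff_single h
      have h2 : ∑ μ ∈ h.coeff.support,
          AddMonoidAlgebra.single ((μ.1 + μ.2, 0) : ℤ × ℤ) (h.coeff μ)
          = AddMonoidAlgebra.ofCoeff
              (Finsupp.mapDomain (fun μ : ℤ × ℤ => ((μ.1 + μ.2, 0) : ℤ × ℤ)) h.coeff) := by
        rw [Finsupp.mapDomain, Finsupp.sum, AddMonoidAlgebra.ofCoeff_sum]; rfl
      rw [h1, h2]
      have h3 : (fun μ : ℤ × ℤ => ((μ.1 + μ.2, 0) : ℤ × ℤ))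
          = (fun l : ℤ => ((l, 0) : ℤ × ℤ)) ∘ (fun μ : ℤ × ℤ => μ.1 + μ.2) := rfl
      rw [h3, Finsupp.mapDomain_comp, hev, Finsupp.mapDomain_zero, AddMonoidAlgebra.ofCoeff_zero,
        sub_zero]
    rw [hrep]
    refine Finset.dvd_sum fun μ _ => ?_
    have : AddMonoidAlgebra.single μ (h.coeff μ)
          - AddMonoidAlgebra.single ((μ.1 + μ.2, 0) : ℤ × ℤ) (h.coeff μ)
        = (h.coeff μ) • (AddMonoidAlgebra.single μ (1 : ℂ)
          - AddMonoidAlgebra.single ((μ.1 + μ.2, 0) : ℤ × ℤ) (1 : ℂ)) := by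
      rw [smul_sub, AddMonoidAlgebra.smul_single, AddMonoidAlgebra.smul_single, smul_eq_mul, mul_one]
    rw [this, Algebra.smul_def]
    exact (dvd_single_sub_single μ).mul_left _

end Aux

/-- A Laurent polynomial `f = Σ a_{ij} x^i y^j` belongs to `𝔄_{1,1}` if and
only if for every `l ∈ ℤ` the linear relation `Σ_{i+j=l} (2i + j) a_{ij} = 0` holds. -/
theorem mem_AA11_iff_linear_relations (f : Alg2) :
    f ∈ AA11 ↔
      ∀ l : ℤ, ∑ μ ∈ f.coeff.support.filter (fun μ : ℤ × ℤ => μ.1 + μ.2 = l),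
        ((2 * μ.1 + μ.2 : ℤ) : ℂ) * f.coeff μ = 0 := by
  classical
  set h : Alg2 := eulx f + (2⁻¹ : ℂ) • euly f with hh
  have hsupp : h.coeff.support ⊆ f.coeff.support := by
    intro μ hμ
    rw [Finsupp.mem_support_iff] at hμ ⊢
    intro hf0
    exact hμ (by rw [hh, hcoeff, hf0, mul_zero])
  have key : ∀ l : ℤ,
      (∑ μ ∈ f.coeff.support.filter (fun μ : ℤ × ℤ => μ.1 + μ.2 = l),
        ((2 * μ.1 + μ.2 : ℤ) : ℂ) * f.coeff μ)
      = 2 * ∑ μ ∈ h.coeff.support.filter (fun μ : ℤ × ℤ => μ.1 + μ.2 = l), h.coeff μ := by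
    intro l
    have e1 : ∑ μ ∈ h.coeff.support.filter (fun μ : ℤ × ℤ => μ.1 + μ.2 = l), h.coeff μ
        = ∑ μ ∈ f.coeff.support.filter (fun μ : ℤ × ℤ => μ.1 + μ.2 = l), h.coeff μ := by
      refine Finset.sum_subset (Finset.filter_subset_filter _ hsupp) ?_
      intro μ hμf hμh
      by_contra hne
      exact hμh (Finset.mem_filter.mpr ⟨Finsupp.mem_support_iff.mpr hne,
        (Finset.mem_filter.mp hμf).2⟩)
    rw [e1, Finset.mul_sum]
    refine Finset.sum_congr rfl fun μ _ => ?_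
    rw [hh, hcoeff]
    push_cast
    ring
  have hmem : f ∈ AA11 ↔ (monA2 (1, 0) - monA2 (0, 1)) ∣ h := Iff.rfl
  rw [hmem, dvd_iff_mapDomain_eq_zero]
  constructor
  · intro hev l
    rw [key l, ← mapDomain_coeff h l, hev]
    simp
  · intro hl
    ext l
    rw [mapDomain_coeff h l, Finsupp.coe_zero, Pi.zero_apply]
    have := hl l
    rw [key l] at this
    have h2 : (2 : ℂ) ≠ 0 := two_ne_zero
    exact (mul_eq_zero.mp this).resolve_left h2
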